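/- arXiv:1910.08156 — 5 statements merged into one kernel-verified Lean document; each statement's English description precedes it below -/
import Mathlib

section
/- (Abstract Fenchel–Moreau theorem) Let X be a nonempty set, 𝓛 a space of abstract linear functions on X, and ℋ the corresponding space of abstract affine functions. For every function f : X → ℝ ∪ {+∞} and every x ∈ X, the biconjugate satisfies f**(x) ≤ f(x); moreover, equality holds at every x ∈ X if and only if f is ℋ-convex. -/
open Set
open scoped Pointwise

variable {X : Type*}

/-- A space of abstract linear functions on `X`: a nonempty family of real-valued
functions closed under addition, each of whose members admits additive decompositions
of every length `m ≥ 1` inside the family. -/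
def IsLinSpace (L : Set (X → ℝ)) : Prop :=
  L.Nonempty ∧
    (∀ l₁ ∈ L, ∀ l₂ ∈ L, l₁ + l₂ ∈ L) ∧
    (∀ l ∈ L, ∀ m : ℕ, 1 ≤ m →
      ∃ g : Fin m → (X → ℝ), (∀ i, g i ∈ L) ∧ l = ∑ i, g i)

/-- Fenchel conjugate of `f : X → ℝ ∪ {+∞}`: `f*(l) = sup_x (l x - f x)`. -/
noncomputable def fconj (f : X → EReal) (l : X → ℝ) : EReal :=
  ⨆ x : X, ((l x : EReal) - f x)

/-- Abstract biconjugate `f**(x) = sup_{l ∈ L} (l x - f*(l))`. -/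
noncomputable def biconj (L : Set (X → ℝ)) (f : X → EReal) (x : X) : EReal :=
  ⨆ l ∈ L, ((l x : EReal) - fconj f l)

/-- ε-subdifferential of `f` at `x` (empty whenever `x ∉ dom f`, i.e. `f x = ⊤`):
`l ∈ ∂_ε f(x)` iff `l ∈ L`, `f x < ⊤` and `f y - f x - (l y - l x) + ε ≥ 0` for all `y`. -/
def subdiff (L : Set (X → ℝ)) (f : X → EReal) (ε : ℝ) (x : X) : Set (X → ℝ) :=
  {l | l ∈ L ∧ f x < ⊤ ∧ ∀ y, f x + ((l y - l x : ℝ) : EReal) ≤ f y + (ε : EReal)}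

/-- Minkowski sum of finitely many subsets of an additive commutative monoid. -/
def minkSum {α : Type*} [AddCommMonoid α] {m : ℕ} (S : Fin m → Set α) : Set α :=
  {a | ∃ g : Fin m → α, (∀ i, g i ∈ S i) ∧ a = ∑ i, g i}

/-- Infimal convolution (over `L`) of finitely many functions,
with the infimum over the empty set equal to `+∞`. -/
noncomputable def infConv (L : Set (X → ℝ)) {m : ℕ}
    (φ : Fin m → (X → ℝ) → EReal) (l : X → ℝ) : EReal :=
  ⨅ (g : Fin m → (X → ℝ)) (_ : ∀ i, g i ∈ L) (_ : ∑ i, g i = l), ∑ i, φ i (g i)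

/-- The space of abstract affine functions generated by `L`: vertical shifts of members of `L`. -/
def Hspace (L : Set (X → ℝ)) : Set (X → ℝ) :=
  {h | ∃ l ∈ L, ∃ c : ℝ, h = fun x => l x + c}

/-- Support set of `f` inside a family `H` of functions: all members of `H` minorizing `f`. -/
def suppIn (H : Set (X → ℝ)) (f : X → EReal) : Set (X → ℝ) :=
  {h | h ∈ H ∧ ∀ x, (h x : EReal) ≤ f x}

/-- `f` is abstract convex w.r.t. the family `H`:
`f` is the upper envelope of a nonempty subfamily of `H`. -/
def ConvexIn (H : Set (X → ℝ)) (f : X → EReal) : Prop :=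
  ∃ S : Set (X → ℝ), S.Nonempty ∧ S ⊆ H ∧ ∀ x, f x = ⨆ h ∈ S, (h x : EReal)

/-- Abstract convexity of a subset `C` of the family `L` (separation property):
every `l₀ ∈ L \ C` is strictly separated from `C` at some point of `X`. -/
def ConvexSetIn (L : Set (X → ℝ)) (C : Set (X → ℝ)) : Prop :=
  C ⊆ L ∧ ∀ l₀ ∈ L, l₀ ∉ C → ∃ x, (⨆ l ∈ C, (l x : EReal)) < (l₀ x : EReal)

/-- Epigraph of the conjugate of `f`, as a subset of `𝓛 × ℝ`. -/
def epiConj (L : Set (X → ℝ)) (f : X → EReal) : Set ((X → ℝ) × ℝ) :=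
  {p | p.1 ∈ L ∧ fconj f p.1 ≤ (p.2 : EReal)}

-- affine minorant gives conjugate bound
lemma aux_conj_le (f : X → EReal) (l : X → ℝ) (c : ℝ)
    (hmin : ∀ y, ((l y + c : ℝ) : EReal) ≤ f y) :
    fconj f l ≤ ((-c : ℝ) : EReal) := by
  refine iSup_le fun y => ?_
  calc (l y : EReal) - f y ≤ (l y : EReal) - ((l y + c : ℝ) : EReal) :=
        EReal.sub_le_sub le_rfl (hmin y)
    _ = ((-c : ℝ) : EReal) := by norm_cast; ring

-- conjugate bound gives term bound
lemma aux_term_ge (f : X → EReal) (l : X → ℝ) (c : ℝ) (x : X)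
    (hc : fconj f l ≤ ((-c : ℝ) : EReal)) :
    ((l x + c : ℝ) : EReal) ≤ (l x : EReal) - fconj f l := by
  calc ((l x + c : ℝ) : EReal) = (l x : EReal) - ((-c : ℝ) : EReal) := by norm_cast; ring
    _ ≤ (l x : EReal) - fconj f l := EReal.sub_le_sub le_rfl hc

/-- abstract Fenchel–Moreau: `f**(x) ≤ f(x)` for all `x`,
and equality holds at every `x` iff `f` is ℋ-convex. -/
theorem stmt6 [Nonempty X] (L : Set (X → ℝ)) (hL : IsLinSpace L)
    (f : X → EReal) (hf : ∀ y, f y ≠ ⊥) :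
    (∀ x, biconj L f x ≤ f x) ∧
    ((∀ x, biconj L f x = f x) ↔ ConvexIn (Hspace L) f) := by
  obtain ⟨⟨l₀, hl₀⟩, -, -⟩ := hL
  have hub : ∀ x, biconj L f x ≤ f x := by
    intro x
    refine iSup₂_le fun l hl => ?_
    rcases eq_top_or_lt_top (f x) with hfx | hfx
    · simp [hfx]
    · lift f x to ℝ using ⟨hfx.ne, hf x⟩ with s hs
      have h1 : ((l x - s : ℝ) : EReal) ≤ fconj f l := by
        rw [EReal.coe_sub, hs]
        exact le_iSup (fun y => ((l y : EReal) - f y)) x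
      calc (l x : EReal) - fconj f l ≤ (l x : EReal) - ((l x - s : ℝ) : EReal) :=
            EReal.sub_le_sub le_rfl h1
        _ = (s : EReal) := by norm_cast; ring
  refine ⟨hub, ?_, ?_⟩
  · -- forward: equality everywhere implies convexity
    intro heq
    by_cases htop : ∀ y, f y = ⊤
    · -- f ≡ ⊤
      refine ⟨{h | ∃ c : ℝ, h = fun y => l₀ y + c}, ⟨fun y => l₀ y + 0, 0, rfl⟩,
        fun h ⟨c, hc⟩ => ⟨l₀, hl₀, c, hc⟩, fun x => ?_⟩
      rw [htop x]
      symm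
      rw [EReal.eq_top_iff_forall_lt]
      intro r
      have hmem : ((fun y => l₀ y + (r - l₀ x + 1)) : X → ℝ) ∈
          {h : X → ℝ | ∃ c : ℝ, h = fun y => l₀ y + c} := ⟨r - l₀ x + 1, rfl⟩
      have := le_iSup₂ (f := fun (h : X → ℝ) (_ : h ∈ {h : X → ℝ | ∃ c : ℝ, h = fun y => l₀ y + c}) => ((h x : ℝ) : EReal)) _ hmem
      refine lt_of_lt_of_le ?_ this
      show (r : EReal) < ((l₀ x + (r - l₀ x + 1) : ℝ) : EReal)
      norm_cast
      linarith
    · push_neg at htop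
      obtain ⟨y₀, hy₀⟩ := htop
      have hy₀' : f y₀ ≠ ⊥ := hf y₀
      -- all conjugates are ≠ ⊥
      have hcne : ∀ l : X → ℝ, fconj f l ≠ ⊥ := by
        intro l hb
        have : (l y₀ : EReal) - f y₀ ≤ fconj f l := le_iSup (fun y => ((l y : EReal) - f y)) y₀
        rw [hb, le_bot_iff] at this
        lift f y₀ to ℝ using ⟨hy₀, hy₀'⟩ with s
        rw [← EReal.coe_sub] at this
        exact EReal.coe_ne_bot _ this
      -- some conjugate is ≠ ⊤
      have hex : ∃ l₁ ∈ L, fconj f l₁ ≠ ⊤ := by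
        by_contra hc
        push_neg at hc
        have : biconj L f y₀ = ⊥ := by
          refine le_bot_iff.1 (iSup₂_le fun l hl => ?_)
          rw [hc l hl, EReal.sub_top]
        rw [heq y₀] at this
        exact hf y₀ this
      obtain ⟨l₁, hl₁, hl₁T⟩ := hex
      set S : Set (X → ℝ) :=
        {h | ∃ l ∈ L, ∃ c : ℝ, fconj f l ≤ ((-c : ℝ) : EReal) ∧ h = fun y => l y + c} with hS
      refine ⟨S, ?_, ?_, ?_⟩
      · exact ⟨fun y => l₁ y + (-(fconj f l₁).toReal), l₁, hl₁, -(fconj f l₁).toReal, by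
          rw [neg_neg, EReal.coe_toReal hl₁T (hcne l₁)], rfl⟩
      · rintro h ⟨l, hl, c, -, rfl⟩
        exact ⟨l, hl, c, rfl⟩
      · intro x
        apply le_antisymm
        · rw [← heq x]
          refine iSup₂_le fun l hl => ?_
          rcases eq_or_ne (fconj f l) ⊤ with hT | hT
          · rw [hT, EReal.sub_top]; exact bot_le
          · have hcc : fconj f l ≤ ((-(-(fconj f l).toReal) : ℝ) : EReal) := by
              rw [neg_neg, EReal.coe_toReal hT (hcne l)]
            have hmem : (fun y => l y + (-(fconj f l).toReal)) ∈ S :=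
              ⟨l, hl, -(fconj f l).toReal, hcc, rfl⟩
            have h2 := le_iSup₂ (f := fun (h : X → ℝ) (_ : h ∈ S) => ((h x : ℝ) : EReal)) _ hmem
            refine le_trans ?_ h2
            show (l x : EReal) - fconj f l ≤ ((l x + -(fconj f l).toReal : ℝ) : EReal)
            rw [← EReal.coe_toReal hT (hcne l)]
            norm_cast
        · refine iSup₂_le ?_
          rintro h ⟨l, hl, c, hc, rfl⟩
          rw [← heq x]
          calc ((l x + c : ℝ) : EReal) ≤ (l x : EReal) - fconj f l := aux_term_ge f l c x hc
            _ ≤ biconj L f x := le_iSup₂ (f := fun (l : X → ℝ) (_ : l ∈ L) => ((l x : EReal) - fconj f l)) _ hl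
  · -- reverse: convexity implies equality
    rintro ⟨S, hne, hsub, hsup⟩ x
    refine le_antisymm (hub x) ?_
    rw [hsup x]
    refine iSup₂_le fun h hh => ?_
    obtain ⟨l, hl, c, rfl⟩ := hsub hh
    have hmin : ∀ y, ((l y + c : ℝ) : EReal) ≤ f y := by
      intro y
      rw [hsup y]
      exact le_iSup₂ (f := fun (h : X → ℝ) (_ : h ∈ S) => ((h y : ℝ) : EReal)) _ hh
    calc ((l x + c : ℝ) : EReal) ≤ (l x : EReal) - fconj f l :=
          aux_term_ge f l c x (aux_conj_le f l c hmin)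
      _ ≤ biconj L f x := le_iSup₂ (f := fun (l : X → ℝ) (_ : l ∈ L) => ((l x : EReal) - fconj f l)) _ hl
end

section
/- Let X be a nonempty set, 𝓛 a space of abstract linear functions on X equipped with a topology, and f₁, …, f_m : X → ℝ ∪ {+∞} (m ≥ 2). Suppose the sum rule holds: for all x ∈ X and ε ≥ 0, ∂_ε(Σ_{i=1}^m f_i)(x) = ⋂_{η>0} cl( ⋃ { Σ_{i=1}^m ∂_{ε_i} f_i(x) : ε_i ≥ 0, Σ ε_i = ε + η } ), where cl denotes closure in 𝓛. Then the following two conditions are equivalent: (A) there exists K > 0 such that for all x ∈ X and ε > 0, ∂_ε(Σ_{i=1}^m f_i)(x) ⊆ Σ_{i=1}^m ∂_{Kε} f_i(x); (B) there exists K > 0 such that for all x ∈ X and ε > 0, cl( Σ_{i=1}^m ∂_ε f_i(x) ) ⊆ Σ_{i=1}^m ∂_{Kε} f_i(x). Moreover, if (B) holds with constant K then (A) holds with any constant K' > K, and if (A) holds with constant K then (B) holds with constant mK. -/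
open Set
open scoped Pointwise

variable {X : Type*}

/-!
The sum rule makes both directions a matter of bookkeeping in `ε`. A member of
`∑ ∂_{e_i} f_i(x)` with `∑ e_i = ε + η` lies in `∑ ∂_{ε+η} f_i(x)`, so the sum rule puts
`∂_ε(∑ f_i)(x)` inside `cl(∑ ∂_{ε+η} f_i(x))`, and (B) at `ε + η` with `η = (K' - K) ε / K`
gives (A) with constant `K'`. Conversely, the choice `e_i = ε + η / m` shows that
`cl(∑ ∂_ε f_i(x)) ⊆ ∂_{mε}(∑ f_i)(x)`, and (A) at `mε` gives (B) with constant `mK`.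
-/

lemma subdiff_mono (L : Set (X → ℝ)) (f : X → EReal) {ε ε' : ℝ} (h : ε ≤ ε') (x : X) :
    subdiff L f ε x ⊆ subdiff L f ε' x := by
  rintro l ⟨hl, hfx, hy⟩
  exact ⟨hl, hfx, fun y => (hy y).trans (add_le_add_right (EReal.coe_le_coe_iff.mpr h) _)⟩

lemma minkSum_mono {α : Type*} [AddCommMonoid α] {m : ℕ} {S S' : Fin m → Set α}
    (h : ∀ i, S i ⊆ S' i) : minkSum S ⊆ minkSum S' := by
  rintro a ⟨g, hg, rfl⟩
  exact ⟨g, fun i => h i (hg i), rfl⟩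

section SumRule

variable (T : TopologicalSpace (X → ℝ)) (L : Set (X → ℝ)) {m : ℕ} (f : Fin m → X → EReal)

/-- The sum rule for `∂_ε(∑ f_i)`, with closures taken in `L`. -/
def SumRule : Prop :=
  ∀ x : X, ∀ ε : ℝ, 0 ≤ ε →
    subdiff L (fun y => ∑ i, f i y) ε x =
      ⋂ (η : ℝ) (_ : 0 < η),
        (@closure _ T (⋃ (e : Fin m → ℝ) (_ : ∀ i, 0 ≤ e i) (_ : ∑ i, e i = ε + η),
          minkSum fun i => subdiff L (f i) (e i) x) ∩ L)

/-- Condition (A) with constant `K`. -/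
def SubdiffSumLe (K : ℝ) : Prop :=
  ∀ x : X, ∀ ε : ℝ, 0 < ε →
    subdiff L (fun y => ∑ i, f i y) ε x ⊆ minkSum fun i => subdiff L (f i) (K * ε) x

/-- Condition (B) with constant `K`. -/
def ClosureSumSubdiffLe (K : ℝ) : Prop :=
  ∀ x : X, ∀ ε : ℝ, 0 < ε →
    @closure _ T (minkSum fun i => subdiff L (f i) ε x) ∩ L ⊆
      minkSum fun i => subdiff L (f i) (K * ε) x

lemma iUnion_minkSum_subdiff_subset (x : X) (δ : ℝ) :
    (⋃ (e : Fin m → ℝ) (_ : ∀ i, 0 ≤ e i) (_ : ∑ i, e i = δ),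
        minkSum fun i => subdiff L (f i) (e i) x) ⊆
      minkSum fun i => subdiff L (f i) δ x := by
  simp only [iUnion_subset_iff]
  intro e he hsum
  refine minkSum_mono fun i => subdiff_mono _ _ ?_ _
  exact hsum ▸ Finset.single_le_sum (fun j _ => he j) (Finset.mem_univ i)

lemma minkSum_subdiff_subset_iUnion (hm : 0 < m) (x : X) {ε η : ℝ} (hε : 0 ≤ ε)
    (hη : 0 < η) :
    (minkSum fun i => subdiff L (f i) ε x) ⊆
      ⋃ (e : Fin m → ℝ) (_ : ∀ i, 0 ≤ e i) (_ : ∑ i, e i = m * ε + η),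
        minkSum fun i => subdiff L (f i) (e i) x := by
  have hη_div : 0 < η / m := by positivity
  refine subset_iUnion_of_subset (fun _ => ε + η / m) <|
    subset_iUnion_of_subset (fun _ => by positivity) <| subset_iUnion_of_subset ?_ ?_
  · simp only [Finset.sum_const, Finset.card_univ, Fintype.card_fin, nsmul_eq_mul]
    field_simp
  · exact minkSum_mono fun i => subdiff_mono _ _ (by linarith) _

variable {T L f}

lemma SumRule.subdiff_subset_closure (hsum : SumRule T L f) (x : X) {ε η : ℝ} (hε : 0 ≤ ε)
    (hη : 0 < η) :
    subdiff L (fun y => ∑ i, f i y) ε x ⊆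
      @closure _ T (minkSum fun i => subdiff L (f i) (ε + η) x) ∩ L := by
  rw [hsum x ε hε]
  exact (iInter₂_subset η hη).trans <|
    inter_subset_inter_left _ (closure_mono (iUnion_minkSum_subdiff_subset L f x _))

lemma SumRule.closure_subset_subdiff (hsum : SumRule T L f) (hm : 0 < m) (x : X) {ε : ℝ}
    (hε : 0 ≤ ε) :
    @closure _ T (minkSum fun i => subdiff L (f i) ε x) ∩ L ⊆
      subdiff L (fun y => ∑ i, f i y) (m * ε) x := by
  rw [hsum x _ (by positivity)]
  exact subset_iInter₂ fun η hη =>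
    inter_subset_inter_left _ (closure_mono (minkSum_subdiff_subset_iUnion L f hm x hε hη))

lemma SumRule.subdiffSumLe_of_closureSumSubdiffLe (hsum : SumRule T L f) {K K' : ℝ}
    (hK : 0 < K) (hB : ClosureSumSubdiffLe T L f K) (hKK' : K < K') : SubdiffSumLe L f K' := by
  intro x ε hε
  have hη : 0 < (K' - K) * ε / K := by have := sub_pos.2 hKK'; positivity
  have hKε : K * (ε + (K' - K) * ε / K) = K' * ε := by field_simp; ring
  exact hKε ▸ (hsum.subdiff_subset_closure x hε.le hη).trans (hB x _ (by positivity))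

lemma SumRule.closureSumSubdiffLe_of_subdiffSumLe (hsum : SumRule T L f) (hm : 0 < m)
    {K : ℝ} (hA : SubdiffSumLe L f K) : ClosureSumSubdiffLe T L f (m * K) := by
  intro x ε hε
  have hKε : K * (m * ε) = m * K * ε := by ring
  exact hKε ▸ (hsum.closure_subset_subdiff hm x hε.le).trans (hA x _ (by positivity))

end SumRule

theorem stmt9_general (L : Set (X → ℝ))
    (T : TopologicalSpace (X → ℝ))
    (m : ℕ) (hm : 2 ≤ m) (f : Fin m → X → EReal)
    (hsum : ∀ x : X, ∀ ε : ℝ, 0 ≤ ε →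
      subdiff L (fun y => ∑ i, f i y) ε x =
        ⋂ (η : ℝ) (_ : 0 < η),
          (@closure _ T (⋃ (e : Fin m → ℝ) (_ : ∀ i, 0 ≤ e i) (_ : ∑ i, e i = ε + η),
            minkSum fun i => subdiff L (f i) (e i) x) ∩ L)) :
    ((∃ K : ℝ, 0 < K ∧ ∀ x : X, ∀ ε : ℝ, 0 < ε →
        subdiff L (fun y => ∑ i, f i y) ε x ⊆
          minkSum fun i => subdiff L (f i) (K * ε) x) ↔
      (∃ K : ℝ, 0 < K ∧ ∀ x : X, ∀ ε : ℝ, 0 < ε →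
        @closure _ T (minkSum fun i => subdiff L (f i) ε x) ∩ L ⊆
          minkSum fun i => subdiff L (f i) (K * ε) x)) ∧
    (∀ K : ℝ, 0 < K →
      (∀ x : X, ∀ ε : ℝ, 0 < ε →
        @closure _ T (minkSum fun i => subdiff L (f i) ε x) ∩ L ⊆
          minkSum fun i => subdiff L (f i) (K * ε) x) →
      ∀ K' : ℝ, K < K' → ∀ x : X, ∀ ε : ℝ, 0 < ε →
        subdiff L (fun y => ∑ i, f i y) ε x ⊆
          minkSum fun i => subdiff L (f i) (K' * ε) x) ∧
    (∀ K : ℝ, 0 < K →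
      (∀ x : X, ∀ ε : ℝ, 0 < ε →
        subdiff L (fun y => ∑ i, f i y) ε x ⊆
          minkSum fun i => subdiff L (f i) (K * ε) x) →
      ∀ x : X, ∀ ε : ℝ, 0 < ε →
        @closure _ T (minkSum fun i => subdiff L (f i) ε x) ∩ L ⊆
          minkSum fun i => subdiff L (f i) ((m : ℝ) * K * ε) x) := by
  have hsum : SumRule T L f := hsum
  have hm : 0 < m := by omega
  have hBA : ∀ K, 0 < K → ClosureSumSubdiffLe T L f K → ∀ K', K < K' → SubdiffSumLe L f K' :=
    fun _ hK hB _ => hsum.subdiffSumLe_of_closureSumSubdiffLe hK hB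
  have hAB : ∀ K, 0 < K → SubdiffSumLe L f K → ClosureSumSubdiffLe T L f (m * K) :=
    fun _ _ => hsum.closureSumSubdiffLe_of_subdiffSumLe hm
  refine ⟨⟨?_, ?_⟩, hBA, hAB⟩
  · rintro ⟨K, hK, hA⟩
    exact ⟨m * K, by positivity, hAB K hK hA⟩
  · rintro ⟨K, hK, hB⟩
    exact ⟨K + 1, by linarith, hBA K hK hB (K + 1) (by linarith)⟩

/-- assuming the sum rule (with closures in `𝓛` w.r.t. a given topology),
conditions (A) and (B) are equivalent; moreover (B) with constant `K` yields (A) with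
any constant `K' > K`, and (A) with constant `K` yields (B) with constant `m * K`. -/
theorem stmt9 [Nonempty X] (L : Set (X → ℝ)) (hL : IsLinSpace L)
    (T : TopologicalSpace (X → ℝ))
    (m : ℕ) (hm : 2 ≤ m) (f : Fin m → X → EReal) (hf : ∀ i y, f i y ≠ ⊥)
    (hsum : ∀ x : X, ∀ ε : ℝ, 0 ≤ ε →
      subdiff L (fun y => ∑ i, f i y) ε x =
        ⋂ (η : ℝ) (_ : 0 < η),
          (@closure _ T (⋃ (e : Fin m → ℝ) (_ : ∀ i, 0 ≤ e i) (_ : ∑ i, e i = ε + η),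
            minkSum fun i => subdiff L (f i) (e i) x) ∩ L)) :
    ((∃ K : ℝ, 0 < K ∧ ∀ x : X, ∀ ε : ℝ, 0 < ε →
        subdiff L (fun y => ∑ i, f i y) ε x ⊆
          minkSum fun i => subdiff L (f i) (K * ε) x) ↔
      (∃ K : ℝ, 0 < K ∧ ∀ x : X, ∀ ε : ℝ, 0 < ε →
        @closure _ T (minkSum fun i => subdiff L (f i) ε x) ∩ L ⊆
          minkSum fun i => subdiff L (f i) (K * ε) x)) ∧
    (∀ K : ℝ, 0 < K →
      (∀ x : X, ∀ ε : ℝ, 0 < ε →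
        @closure _ T (minkSum fun i => subdiff L (f i) ε x) ∩ L ⊆
          minkSum fun i => subdiff L (f i) (K * ε) x) →
      ∀ K' : ℝ, K < K' → ∀ x : X, ∀ ε : ℝ, 0 < ε →
        subdiff L (fun y => ∑ i, f i y) ε x ⊆
          minkSum fun i => subdiff L (f i) (K' * ε) x) ∧
    (∀ K : ℝ, 0 < K →
      (∀ x : X, ∀ ε : ℝ, 0 < ε →
        subdiff L (fun y => ∑ i, f i y) ε x ⊆
          minkSum fun i => subdiff L (f i) (K * ε) x) →
      ∀ x : X, ∀ ε : ℝ, 0 < ε →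
        @closure _ T (minkSum fun i => subdiff L (f i) ε x) ∩ L ⊆
          minkSum fun i => subdiff L (f i) ((m : ℝ) * K * ε) x) :=
  stmt9_general L T m hm f hsum
end

section
/- (Characterization of zero duality gap) Let X be a nonempty set and 𝓛 a space of abstract linear functions on X containing the zero function. Let f₁, …, f_m : X → ℝ ∪ {+∞} (m ≥ 2) with ⋂_{i=1}^m dom f_i ≠ ∅. The following are equivalent: (i) 0 ∈ ⋂_{ε>0} ⋃_{x ∈ X} ( ∂_ε f₁(x) + ⋯ + ∂_ε f_m(x) ); (ii) (f₁ + ⋯ + f_m)*(0) = (f₁* □ ⋯ □ f_m*)(0) < +∞. -/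
open Set
open scoped Pointwise

variable {X : Type*}

/-!
By Fenchel–Young, `l x - f x ≤ f*(l)`, so for `x ∈ X` and `l₁ + ⋯ + lₘ = 0` the gaps
`fᵢ*(lᵢ) + fᵢ(x) - lᵢ(x)` are nonnegative, and the infimum of their sum over all such `(x, l)` is
`(f₁* □ ⋯ □ fₘ*)(0) - (f₁ + ⋯ + fₘ)*(0)`. The `i`-th gap is at most `ε` exactly when
`lᵢ ∈ ∂_ε fᵢ(x)`. Hence (i) makes the sum of the gaps at most `m ε` for every `ε`, which is zero
duality gap, and conversely a total gap below `ε` bounds each single gap by `ε`.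
-/

namespace EReal

variable {ι : Type*}

lemma coe_finset_sum (s : Finset ι) (a : ι → ℝ) :
    ((∑ i ∈ s, a i : ℝ) : EReal) = ∑ i ∈ s, (a i : EReal) :=
  map_sum (⟨⟨Real.toEReal, coe_zero⟩, coe_add⟩ : ℝ →+ EReal) a s

lemma sum_ne_bot {s : Finset ι} {b : ι → EReal} (hb : ∀ i ∈ s, b i ≠ ⊥) :
    ∑ i ∈ s, b i ≠ ⊥ :=
  Finset.sum_induction b (· ≠ ⊥) (fun _ _ h₁ h₂ => add_ne_bot_iff.2 ⟨h₁, h₂⟩) zero_ne_bot hb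

lemma sum_lt_top_iff {s : Finset ι} {b : ι → EReal} (hb : ∀ i ∈ s, b i ≠ ⊥) :
    ∑ i ∈ s, b i < ⊤ ↔ ∀ i ∈ s, b i < ⊤ := by
  classical
  refine ⟨fun hs j hj => lt_top_iff_ne_top.2 fun hbj => hs.ne ?_, fun h =>
    Finset.sum_induction b (· < ⊤) (fun _ _ h₁ h₂ => add_lt_top h₁.ne h₂.ne) (coe_lt_top 0) h⟩
  rw [← Finset.add_sum_erase _ _ hj, hbj]
  exact top_add_of_ne_bot (sum_ne_bot fun i hi => hb i (Finset.mem_of_mem_erase hi))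

lemma exists_coe_of_ne_bot_of_lt_top {b : ι → EReal} (hbot : ∀ i, b i ≠ ⊥)
    (htop : ∀ i, b i < ⊤) : ∃ r : ι → ℝ, ∀ i, b i = r i :=
  ⟨fun i => (b i).toReal, fun i => (coe_toReal (htop i).ne (hbot i)).symm⟩

lemma le_coe_of_forall_pos_le_coe_add {a : EReal} {s : ℝ}
    (h : ∀ ε : ℝ, 0 < ε → a ≤ ((s + ε : ℝ) : EReal)) : a ≤ s :=
  le_of_forall_lt_iff_le.1 fun z hz => by
    simpa using h (z - s) (_root_.sub_pos.2 (EReal.coe_lt_coe_iff.1 hz))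

end EReal

lemma sub_le_fconj (f : X → EReal) (l : X → ℝ) (x : X) : (l x : EReal) - f x ≤ fconj f l :=
  le_iSup (fun y => (l y : EReal) - f y) x

lemma fconj_ne_bot_of_lt_top {f : X → EReal} {x : X} (hx : f x < ⊤) (l : X → ℝ) :
    fconj f l ≠ ⊥ :=
  ne_bot_of_le_ne_bot (EReal.add_ne_bot_iff.2 ⟨EReal.coe_ne_bot _,
    fun h => hx.ne (EReal.neg_eq_bot_iff.1 h)⟩) (sub_le_fconj f l x)

lemma mem_subdiff_iff_fconj_le {L : Set (X → ℝ)} {f : X → EReal} {ε : ℝ} {x : X} {r : ℝ}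
    (hx : f x = r) {l : X → ℝ} :
    l ∈ subdiff L f ε x ↔ l ∈ L ∧ fconj f l ≤ ((l x - r + ε : ℝ) : EReal) := by
  simp only [subdiff, Set.mem_ofPred_eq, hx, EReal.coe_lt_top, true_and, fconj, iSup_le_iff]
  refine and_congr_right fun _ => forall_congr' fun y => ?_
  induction f y using EReal.rec with
  | bot =>
    simp only [EReal.bot_add, EReal.coe_sub_bot, le_bot_iff, top_le_iff, ← EReal.coe_add,
      EReal.coe_ne_bot, EReal.coe_ne_top]
  | coe t =>
    norm_cast
    constructor <;> intro h <;> linarith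
  | top => simp [EReal.sub_top]

section WeakDuality

variable {ι : Type*} [Fintype ι]

lemma fconj_sum_le_sum_fconj {f : ι → X → EReal} (hf : ∀ i y, f i y ≠ ⊥) (g : ι → X → ℝ) :
    fconj (fun x => ∑ i, f i x) (∑ i, g i) ≤ ∑ i, fconj (f i) (g i) := by
  refine iSup_le fun x => ?_
  dsimp only
  by_cases hx : ∑ i, f i x < ⊤
  · obtain ⟨r, hr⟩ := EReal.exists_coe_of_ne_bot_of_lt_top (hf · x)
      ((EReal.sum_lt_top_iff fun i _ => hf i x).1 hx · (Finset.mem_univ _))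
    calc (((∑ i, g i) x : ℝ) : EReal) - ∑ i, f i x
        = ∑ i, (((g i x - r i : ℝ)) : EReal) := by
          simp only [hr, ← EReal.coe_finset_sum, ← EReal.coe_sub, Finset.sum_apply,
            Finset.sum_sub_distrib]
      _ ≤ ∑ i, fconj (f i) (g i) := Finset.sum_le_sum fun i _ => by
          rw [EReal.coe_sub, ← hr i]
          exact sub_le_fconj (f i) (g i) x
  · rw [not_lt_top_iff.1 hx, EReal.sub_top]
    exact bot_le

lemma fconj_sum_le_infConv {L : Set (X → ℝ)} {m : ℕ} {f : Fin m → X → EReal}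
    (hf : ∀ i y, f i y ≠ ⊥) (l : X → ℝ) :
    fconj (fun x => ∑ i, f i x) l ≤ infConv L (fun i => fconj (f i)) l :=
  le_iInf fun g => le_iInf₂ fun _ hg => hg ▸ fconj_sum_le_sum_fconj hf g

end WeakDuality

lemma infConv_le_sub_sum_of_mem_subdiff {L : Set (X → ℝ)} {m : ℕ} {f : Fin m → X → EReal}
    (hf : ∀ i y, f i y ≠ ⊥) {ε : ℝ} {x : X} {g : Fin m → X → ℝ}
    (hg : ∀ i, g i ∈ subdiff L (f i) ε x) (hsum : ∑ i, g i = 0) :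
    infConv L (fun i => fconj (f i)) 0 ≤ ((m * ε : ℝ) : EReal) - ∑ i, f i x := by
  obtain ⟨r, hr⟩ := EReal.exists_coe_of_ne_bot_of_lt_top (hf · x) fun i => (hg i).2.1
  have hgx : ∑ i, g i x = 0 := by rw [← Finset.sum_apply, hsum, Pi.zero_apply]
  calc infConv L (fun i => fconj (f i)) 0
      ≤ ∑ i, fconj (f i) (g i) :=
        iInf_le_of_le g <| iInf_le_of_le (fun i => (hg i).1) <| iInf_le_of_le hsum le_rfl
    _ ≤ ∑ i, ((g i x - r i + ε : ℝ) : EReal) :=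
        Finset.sum_le_sum fun i _ => ((mem_subdiff_iff_fconj_le (hr i)).1 (hg i)).2
    _ = ((m * ε : ℝ) : EReal) - ∑ i, f i x := by
        simp only [hr, ← EReal.coe_finset_sum, ← EReal.coe_sub, Finset.sum_add_distrib,
          Finset.sum_sub_distrib, hgx, Finset.sum_const, Finset.card_univ, Fintype.card_fin,
          nsmul_eq_mul, zero_sub, neg_add_eq_sub]

lemma mem_subdiff_of_sum_fconj_add_le {ι : Type*} [Fintype ι] {L : Set (X → ℝ)}
    {f : ι → X → EReal} (hf : ∀ i y, f i y ≠ ⊥) {g : ι → X → ℝ} (hgL : ∀ i, g i ∈ L) {x : X}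
    (hgx : ∑ i, g i x = 0) {a b ε : ℝ} (hconj : ∑ i, fconj (f i) (g i) ≤ a)
    (hx : ∑ i, f i x ≤ b) (hab : a + b ≤ ε) (i : ι) : g i ∈ subdiff L (f i) ε x := by
  have hfx : ∀ j, f j x < ⊤ := ((EReal.sum_lt_top_iff fun j _ => hf j x).1
    (hx.trans_lt (EReal.coe_lt_top b)) · (Finset.mem_univ _))
  obtain ⟨r, hr⟩ := EReal.exists_coe_of_ne_bot_of_lt_top (hf · x) hfx
  have hconj_bot : ∀ j, fconj (f j) (g j) ≠ ⊥ := fun j => fconj_ne_bot_of_lt_top (hfx j) _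
  obtain ⟨c, hc⟩ := EReal.exists_coe_of_ne_bot_of_lt_top hconj_bot
    ((EReal.sum_lt_top_iff fun j _ => hconj_bot j).1 (hconj.trans_lt (EReal.coe_lt_top a))
      · (Finset.mem_univ _))
  have young : ∀ j, g j x - r j ≤ c j := fun j => by
    simpa only [hr, hc, ← EReal.coe_sub, EReal.coe_le_coe_iff] using sub_le_fconj (f j) (g j) x
  simp only [hr, hc, ← EReal.coe_finset_sum, EReal.coe_le_coe_iff] at hconj hx
  rw [mem_subdiff_iff_fconj_le (hr i), hc i, EReal.coe_le_coe_iff]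
  refine ⟨hgL i, ?_⟩
  -- the Fenchel–Young gaps `c j + r j - g j x` are nonnegative and sum to at most `ε`
  have hgap := Finset.single_le_sum (f := fun j => c j + r j - g j x)
    (fun j _ => by linarith [young j]) (Finset.mem_univ i)
  simp only [Finset.sum_sub_distrib, Finset.sum_add_distrib, hgx] at hgap
  linarith

section ZeroDualityGap

variable {L : Set (X → ℝ)} {m : ℕ} {f : Fin m → X → EReal}

lemma fconj_sum_eq_infConv_of_zero_mem_minkSum_subdiff (hf : ∀ i y, f i y ≠ ⊥)
    (hS : fconj (fun x => ∑ i, f i x) 0 ≠ ⊥)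
    (h : ∀ ε : ℝ, 0 < ε → ∃ x, (0 : X → ℝ) ∈ minkSum fun i => subdiff L (f i) ε x) :
    fconj (fun x => ∑ i, f i x) 0 = infConv L (fun i => fconj (f i)) 0 ∧
      fconj (fun x => ∑ i, f i x) 0 < ⊤ := by
  set S := fconj (fun x => ∑ i, f i x) 0
  set I := infConv L (fun i => fconj (f i)) 0
  have hbound : ∀ ε : ℝ, 0 < ε → I < ⊤ ∧ I ≤ S + ε := by
    intro ε hε
    have hm : (0 : ℝ) < m + 1 := by positivity
    obtain ⟨x, g, hg, hsum⟩ := h (ε / (m + 1)) (div_pos hε hm)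
    have hI := infConv_le_sub_sum_of_mem_subdiff hf hg hsum.symm
    have hyoung : -∑ i, f i x ≤ S := by
      simpa only [Pi.zero_apply, EReal.coe_zero, zero_sub] using
        sub_le_fconj (fun x => ∑ i, f i x) 0 x
    have hmε : (m : ℝ) * (ε / (m + 1)) ≤ ε := by
      rw [mul_div_assoc', div_le_iff₀ hm]
      linarith
    rw [sub_eq_add_neg] at hI
    refine ⟨hI.trans_lt (EReal.add_lt_top (EReal.coe_ne_top _) ?_), ?_⟩
    · exact fun h => EReal.sum_ne_bot (fun i _ => hf i x) (EReal.neg_eq_top_iff.1 h)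
    · rw [add_comm S]
      exact hI.trans (add_le_add (EReal.coe_le_coe_iff.2 hmε) hyoung)
  have hweak : S ≤ I := fconj_sum_le_infConv hf 0
  have htop : S < ⊤ := hweak.trans_lt (hbound 1 one_pos).1
  obtain ⟨s, hs⟩ : ∃ s : ℝ, S = s := ⟨S.toReal, (EReal.coe_toReal htop.ne hS).symm⟩
  refine ⟨le_antisymm hweak ?_, htop⟩
  rw [hs]
  exact EReal.le_coe_of_forall_pos_le_coe_add fun ε hε => by
    simpa only [hs, ← EReal.coe_add] using (hbound ε hε).2

lemma zero_mem_minkSum_subdiff_of_fconj_sum_eq_infConv (hf : ∀ i y, f i y ≠ ⊥)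
    (hS : fconj (fun x => ∑ i, f i x) 0 ≠ ⊥)
    (heq : fconj (fun x => ∑ i, f i x) 0 = infConv L (fun i => fconj (f i)) 0)
    (htop : fconj (fun x => ∑ i, f i x) 0 < ⊤) {ε : ℝ} (hε : 0 < ε) :
    ∃ x, (0 : X → ℝ) ∈ minkSum fun i => subdiff L (f i) ε x := by
  obtain ⟨s, hs⟩ : ∃ s : ℝ, fconj (fun x => ∑ i, f i x) 0 = s :=
    ⟨_, (EReal.coe_toReal htop.ne hS).symm⟩
  have hI : infConv L (fun i => fconj (f i)) 0 < ((s + ε / 2 : ℝ) : EReal) := by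
    rw [← heq, hs, EReal.coe_lt_coe_iff]
    linarith
  obtain ⟨g, hgL, hsum, hg⟩ : ∃ g : Fin m → X → ℝ, (∀ i, g i ∈ L) ∧ ∑ i, g i = 0 ∧
      ∑ i, fconj (f i) (g i) < ((s + ε / 2 : ℝ) : EReal) := by
    simpa only [infConv, iInf_lt_iff, exists_prop] using hI
  have hS' : ((s - ε / 2 : ℝ) : EReal) < fconj (fun x => ∑ i, f i x) 0 := by
    rw [hs, EReal.coe_lt_coe_iff]
    linarith
  obtain ⟨x, hx⟩ := lt_iSup_iff.1 hS'
  rw [Pi.zero_apply, EReal.coe_zero, zero_sub, EReal.lt_neg_comm, ← EReal.coe_neg,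
    neg_sub] at hx
  have hgx : ∑ i, g i x = 0 := by rw [← Finset.sum_apply, hsum, Pi.zero_apply]
  exact ⟨x, g, mem_subdiff_of_sum_fconj_add_le hf hgL hgx hg.le hx.le (by linarith),
    hsum.symm⟩

end ZeroDualityGap

theorem stmt10_general (L : Set (X → ℝ))
    (m : ℕ) (f : Fin m → X → EReal) (hf : ∀ i y, f i y ≠ ⊥)
    (hdom : ∃ x, ∀ i, f i x < ⊤) :
    ((0 : X → ℝ) ∈ ⋂ (ε : ℝ) (_ : 0 < ε), ⋃ x : X,
        minkSum fun i => subdiff L (f i) ε x) ↔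
      (fconj (fun x => ∑ i, f i x) 0 = infConv L (fun i => fconj (f i)) 0 ∧
        fconj (fun x => ∑ i, f i x) 0 < ⊤) := by
  obtain ⟨x₀, hx₀⟩ := hdom
  have hS : fconj (fun x => ∑ i, f i x) 0 ≠ ⊥ :=
    fconj_ne_bot_of_lt_top (x := x₀)
      ((EReal.sum_lt_top_iff fun i _ => hf i x₀).2 fun i _ => hx₀ i) 0
  simp only [Set.mem_iInter, Set.mem_iUnion]
  exact ⟨fconj_sum_eq_infConv_of_zero_mem_minkSum_subdiff hf hS, fun ⟨heq, htop⟩ _ hε =>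
    zero_mem_minkSum_subdiff_of_fconj_sum_eq_infConv hf hS heq htop hε⟩

/-- characterization of zero duality gap: `0` belongs to the
intersection over `ε > 0` of `⋃_{x ∈ X} (∂_ε f₁(x) + ⋯ + ∂_ε f_m(x))` iff
the conjugate of the sum and the infimal convolution of the conjugates agree
and are finite at `0`. -/
theorem stmt10 [Nonempty X] (L : Set (X → ℝ)) (hL : IsLinSpace L)
    (h0 : (0 : X → ℝ) ∈ L)
    (m : ℕ) (hm : 2 ≤ m) (f : Fin m → X → EReal) (hf : ∀ i y, f i y ≠ ⊥)
    (hdom : ∃ x, ∀ i, f i x < ⊤) :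
    ((0 : X → ℝ) ∈ ⋂ (ε : ℝ) (_ : 0 < ε), ⋃ x : X,
        minkSum fun i => subdiff L (f i) ε x) ↔
      (fconj (fun x => ∑ i, f i x) 0 = infConv L (fun i => fconj (f i)) 0 ∧
        fconj (fun x => ∑ i, f i x) 0 < ⊤) :=
  stmt10_general L m f hf hdom
end

section
/- Let X = ℝ and ℋ := { ψ_{a,b} : a, b ∈ ℝ } where ψ_{a,b}(x) := a x² + b. (i) If C ⊆ ℋ is ℋ-convex and A ⊆ ℝ² is the parameter set with C = { ψ_{a,b} : (a,b) ∈ A }, then A is closed, convex and satisfies A − ℝ²₊ ⊆ A, where ℝ²₊ := {(a,b) : a ≥ 0, b ≥ 0}. (ii) Conversely, if A ⊆ ℝ² is closed, convex, satisfies A − ℝ²₊ ⊆ A, and the pointwise supremum sup_{(a,b) ∈ A} ψ_{a,b} is not identically +∞, then C := { ψ_{a,b} : (a,b) ∈ A } is ℋ-convex. -/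
open Set
open scoped Pointwise

variable {X : Type*}

/-- The abstract linear function `φ_a : x ↦ a x²` on `ℝ`. -/
noncomputable def phiQ (a : ℝ) : ℝ → ℝ := fun x => a * x ^ 2

/-- The abstract affine function `ψ_{a,b} : x ↦ a x² + b` on `ℝ`. -/
noncomputable def psiQ (a b : ℝ) : ℝ → ℝ := fun x => a * x ^ 2 + b

/-- The space `𝓛 = {φ_a : a ∈ ℝ}` of abstract linear functions on `ℝ`. -/
def Lq : Set (ℝ → ℝ) := Set.range phiQ

/-- The space `ℋ = {ψ_{a,b} : a, b ∈ ℝ}` of abstract affine functions on `ℝ`. -/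
def Hq : Set (ℝ → ℝ) := {h | ∃ a b : ℝ, h = psiQ a b}

/-!
An `ℋ`-convex set `C` consists of exactly those `ψ_{a,b}` lying below the upper envelope of `C`,
and for fixed `x` the condition `ψ_{a,b}(x) ≤ s` on `(a, b)` is a closed half-plane stable under
decreasing `a` and `b`; this gives (i).

For (ii), separate `(a₀, b₀) ∉ A` from `A` by a line `u a + v b = c`. Since `A − ℝ²₊ ⊆ A`, the
coefficients `u, v` are nonnegative. The envelope is finite at some `x₀`, so `x₀² a + b` is bounded
above on `A`; tilting the line slightly in that direction makes `v > 0`, and then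
`u a + v b = v ψ_{a,b}(√(u / v))` turns the separating line into a separating point `√(u / v)`.
-/

theorem ConvexSetIn.mem_of_forall_le_iSup {H C : Set (X → ℝ)} (hC : ConvexSetIn H C)
    {h : X → ℝ} (hH : h ∈ H) (hle : ∀ x, (h x : EReal) ≤ ⨆ l ∈ C, (l x : EReal)) : h ∈ C := by
  by_contra hh
  obtain ⟨x, hx⟩ := hC.2 h hH hh
  exact (hle x).not_gt hx

theorem psiQ_apply_sqrt (a b : ℝ) {t : ℝ} (ht : 0 ≤ t) : psiQ a b √t = t * a + b := by
  rw [psiQ, Real.sq_sqrt ht, mul_comm]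

theorem psiQ_injective : Function.Injective fun p : ℝ × ℝ => psiQ p.1 p.2 := by
  intro p q h
  have h0 := congrFun h 0
  have h1 := congrFun h 1
  simp only [psiQ] at h0 h1
  ext <;> linarith

theorem iSup_mem_setOf_psiQ (A : Set (ℝ × ℝ)) (x : ℝ) :
    ⨆ l ∈ {h | ∃ p ∈ A, h = psiQ p.1 p.2}, ((l x : ℝ) : EReal) =
      ⨆ p ∈ A, ((psiQ p.1 p.2 x : ℝ) : EReal) := by
  have : {h | ∃ p ∈ A, h = psiQ p.1 p.2} = (fun p : ℝ × ℝ => psiQ p.1 p.2) '' A := by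
    ext; simp [eq_comm]
  rw [this, iSup_image]

def psiQMinorants (S : ℝ → EReal) : Set (ℝ × ℝ) :=
  {p | ∀ x, ((psiQ p.1 p.2 x : ℝ) : EReal) ≤ S x}

theorem ConvexSetIn.eq_psiQMinorants {C : Set (ℝ → ℝ)} {A : Set (ℝ × ℝ)}
    (hC : ConvexSetIn Hq C) (hCA : C = {h | ∃ p ∈ A, h = psiQ p.1 p.2}) :
    A = psiQMinorants fun x => ⨆ p ∈ A, ((psiQ p.1 p.2 x : ℝ) : EReal) := by
  subst hCA
  ext p
  refine ⟨fun hp x => le_iSup₂ (f := fun q (_ : q ∈ A) => ((psiQ q.1 q.2 x : ℝ) : EReal)) p hp,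
    fun hp => ?_⟩
  obtain ⟨q, hq, hpq⟩ := hC.mem_of_forall_le_iSup ⟨p.1, p.2, rfl⟩ fun x => by
    simpa only [iSup_mem_setOf_psiQ] using hp x
  rwa [psiQ_injective hpq]

theorem isClosed_psiQMinorants (S : ℝ → EReal) : IsClosed (psiQMinorants S) := by
  simp only [psiQMinorants, ofPred_forall]
  refine isClosed_iInter fun x => isClosed_le (continuous_coe_real_ereal.comp ?_) continuous_const
  simp only [psiQ]
  fun_prop

theorem convex_psiQMinorants (S : ℝ → EReal) : Convex ℝ (psiQMinorants S) := by
  intro p hp q hq a b ha hb hab x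
  have hcomb : psiQ (a • p + b • q).1 (a • p + b • q).2 x =
      a * psiQ p.1 p.2 x + b * psiQ q.1 q.2 x := by
    simp only [psiQ, Prod.fst_add, Prod.snd_add, Prod.smul_fst, Prod.smul_snd, smul_eq_mul]
    ring
  rw [hcomb]
  exact le_trans (EReal.coe_le_coe_iff.2 (Convex.combo_le_max _ _ ha hb hab))
    (max_le (hp x) (hq x))

theorem sub_mem_psiQMinorants {S : ℝ → EReal} {p q : ℝ × ℝ} (hp : p ∈ psiQMinorants S)
    (hq₁ : 0 ≤ q.1) (hq₂ : 0 ≤ q.2) : p - q ∈ psiQMinorants S := by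
  refine fun x => le_trans (EReal.coe_le_coe_iff.2 ?_) (hp x)
  simp only [psiQ, Prod.fst_sub, Prod.snd_sub]
  nlinarith [sq_nonneg x]

theorem linearMap_prod_apply (f : ℝ × ℝ →ₗ[ℝ] ℝ) (p : ℝ × ℝ) :
    f p = f (1, 0) * p.1 + f (0, 1) * p.2 := by
  have hp : p = p.1 • ((1 : ℝ), (0 : ℝ)) + p.2 • ((0 : ℝ), (1 : ℝ)) := by ext <;> simp
  conv_lhs => rw [hp]
  simp only [map_add, map_smul, smul_eq_mul, mul_comm]

theorem nonneg_of_forall_sub_mul_le {k c u : ℝ} (h : ∀ s : ℝ, 0 ≤ s → k - u * s ≤ c) :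
    0 ≤ u := by
  by_contra! hu
  have hs := h ((c - k + 1) / -u) (div_nonneg (by linarith [h 0 le_rfl]) (by linarith))
  rw [mul_div_assoc', div_neg, mul_div_cancel_left₀ _ hu.ne] at hs
  linarith

theorem coeffs_nonneg_of_bddAbove {A : Set (ℝ × ℝ)} (hne : A.Nonempty)
    (hdown : ∀ p ∈ A, ∀ q : ℝ × ℝ, 0 ≤ q.1 → 0 ≤ q.2 → p - q ∈ A) {u v c : ℝ}
    (hbdd : ∀ p ∈ A, u * p.1 + v * p.2 ≤ c) : 0 ≤ u ∧ 0 ≤ v := by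
  obtain ⟨p, hp⟩ := hne
  refine ⟨nonneg_of_forall_sub_mul_le (k := u * p.1 + v * p.2) (c := c) fun s hs => ?_,
    nonneg_of_forall_sub_mul_le (k := u * p.1 + v * p.2) (c := c) fun s hs => ?_⟩
  · have := hbdd _ (hdown p hp (s, 0) hs le_rfl)
    simp only [Prod.fst_sub, Prod.snd_sub, sub_zero] at this
    linarith
  · have := hbdd _ (hdown p hp (0, s) le_rfl hs)
    simp only [Prod.fst_sub, Prod.snd_sub, sub_zero] at this
    linarith

theorem exists_psiQ_separation_of_linear {A : Set (ℝ × ℝ)} {p₀ : ℝ × ℝ} {u v c : ℝ}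
    (hu : 0 ≤ u) (hv : 0 < v) (hA : ∀ p ∈ A, u * p.1 + v * p.2 ≤ c)
    (hp₀ : c < u * p₀.1 + v * p₀.2) :
    ∃ x c', (∀ p ∈ A, psiQ p.1 p.2 x ≤ c') ∧ c' < psiQ p₀.1 p₀.2 x := by
  have hψ : ∀ p : ℝ × ℝ, v * psiQ p.1 p.2 √(u / v) = u * p.1 + v * p.2 := fun p => by
    rw [psiQ_apply_sqrt _ _ (div_nonneg hu hv.le)]
    field_simp
  refine ⟨√(u / v), c / v, fun p hp => ?_, ?_⟩
  · rw [le_div_iff₀ hv, mul_comm, hψ]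
    exact hA p hp
  · rw [div_lt_iff₀ hv, mul_comm, hψ]
    exact hp₀

theorem exists_psiQ_separation {A : Set (ℝ × ℝ)} (hcl : IsClosed A) (hcv : Convex ℝ A)
    (hdown : ∀ p ∈ A, ∀ q : ℝ × ℝ, 0 ≤ q.1 → 0 ≤ q.2 → p - q ∈ A) {x₀ M : ℝ}
    (hM : ∀ p ∈ A, psiQ p.1 p.2 x₀ ≤ M) {p₀ : ℝ × ℝ} (hp₀ : p₀ ∉ A) :
    ∃ x c, (∀ p ∈ A, psiQ p.1 p.2 x ≤ c) ∧ c < psiQ p₀.1 p₀.2 x := by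
  rcases A.eq_empty_or_nonempty with rfl | hne
  · exact ⟨0, psiQ p₀.1 p₀.2 0 - 1, by simp, by linarith⟩
  obtain ⟨f, c, hfA, hfp₀⟩ := geometric_hahn_banach_closed_point hcv hcl hp₀
  set u := f (1, 0)
  set v := f (0, 1)
  have hf (p : ℝ × ℝ) : f p = u * p.1 + v * p.2 := linearMap_prod_apply f.toLinearMap p
  rw [hf] at hfp₀
  replace hfA : ∀ p ∈ A, u * p.1 + v * p.2 < c := fun p hp => hf p ▸ hfA p hp
  obtain ⟨hu, hv⟩ := coeffs_nonneg_of_bddAbove hne hdown fun p hp => (hfA p hp).le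
  obtain ⟨ε, hε, hεM⟩ := exists_pos_mul_lt (sub_pos.2 hfp₀) (M - psiQ p₀.1 p₀.2 x₀)
  refine exists_psiQ_separation_of_linear (u := u + ε * x₀ ^ 2) (v := v + ε) (c := c + ε * M)
    (by positivity) (by positivity) (fun p hp => ?_) ?_
  · have hfp := hfA p hp
    have hMp := hM p hp
    simp only [psiQ] at hMp
    nlinarith
  · simp only [psiQ] at hεM
    nlinarith

/-- (i) if `C ⊆ ℋ` is ℋ-convex with parameter set `A ⊆ ℝ²`
(`C = {ψ_{a,b} : (a,b) ∈ A}`), then `A` is closed, convex and `A − ℝ²₊ ⊆ A`;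
(ii) conversely, if `A` is closed, convex, satisfies `A − ℝ²₊ ⊆ A` and the pointwise
supremum of `{ψ_{a,b} : (a,b) ∈ A}` is not identically `+∞`, then the induced set `C`
is ℋ-convex. -/
theorem stmt18 :
    (∀ (C : Set (ℝ → ℝ)) (A : Set (ℝ × ℝ)),
      ConvexSetIn Hq C → C = {h | ∃ p ∈ A, h = psiQ p.1 p.2} →
      IsClosed A ∧ Convex ℝ A ∧
        (∀ p ∈ A, ∀ q : ℝ × ℝ, 0 ≤ q.1 → 0 ≤ q.2 → p - q ∈ A)) ∧
    (∀ A : Set (ℝ × ℝ), IsClosed A → Convex ℝ A →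
      (∀ p ∈ A, ∀ q : ℝ × ℝ, 0 ≤ q.1 → 0 ≤ q.2 → p - q ∈ A) →
      (∃ x : ℝ, (⨆ p ∈ A, ((psiQ p.1 p.2 x : ℝ) : EReal)) ≠ ⊤) →
      ConvexSetIn Hq {h | ∃ p ∈ A, h = psiQ p.1 p.2}) := by
  refine ⟨fun C A hC hCA => ?_, fun A hcl hcv hdown ⟨x₀, hx₀⟩ => ⟨?_, ?_⟩⟩
  · rw [hC.eq_psiQMinorants hCA]
    exact ⟨isClosed_psiQMinorants _, convex_psiQMinorants _,
      fun p hp q hq₁ hq₂ => sub_mem_psiQMinorants hp hq₁ hq₂⟩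
  · rintro _ ⟨p, -, rfl⟩
    exact ⟨p.1, p.2, rfl⟩
  · rintro _ ⟨a₀, b₀, rfl⟩ hC₀
    have hM (p : ℝ × ℝ) (hp : p ∈ A) :
        psiQ p.1 p.2 x₀ ≤ (⨆ p ∈ A, ((psiQ p.1 p.2 x₀ : ℝ) : EReal)).toReal :=
      EReal.coe_le_coe_iff.1 <| (le_iSup₂ (f := fun q (_ : q ∈ A) =>
        ((psiQ q.1 q.2 x₀ : ℝ) : EReal)) p hp).trans (EReal.le_coe_toReal hx₀)
    obtain ⟨x, c, hle, hlt⟩ := exists_psiQ_separation hcl hcv hdown hM (p₀ := (a₀, b₀))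
      fun h => hC₀ ⟨_, h, rfl⟩
    refine ⟨x, ?_⟩
    rw [iSup_mem_setOf_psiQ]
    exact (iSup₂_le fun p hp => EReal.coe_le_coe_iff.2 (hle p hp)).trans_lt
      (EReal.coe_lt_coe_iff.2 hlt)
end

section
/- Let X = ℝ and ℋ := { ψ_{a,b} : a, b ∈ ℝ } where ψ_{a,b}(x) := a x² + b, equipped with the topology of pointwise convergence. If f, g : ℝ → ℝ ∪ {+∞} are ℋ-convex and dom f ∩ dom g ≠ ∅, then cl( supp f + supp g ) is an ℋ-convex set and supp (f + g) = cl( supp f + supp g ), where the sum of support sets is the Minkowski sum of sets of functions and cl denotes closure in the pointwise convergence topology. Equivalently, cl( epi f* + epi g* ) = epi (f + g)*, where conjugates are taken relative to 𝓛 := { x ↦ a x² : a ∈ ℝ } and the closure is taken in 𝓛 × ℝ. -/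
open Set
open scoped Pointwise

variable {X : Type*}

/-!
Write `P f = {(a, b) | ψ_{a,b} ≤ f} ⊆ ℝ²` (`minorantCoeffs f`). It is a closed convex lower
set, and the injective linear maps `(a, b) ↦ ψ_{a,b}` onto `ℋ` and `(a, b) ↦ (φ_a, -b)` onto
`𝓛 × ℝ` are closed embeddings carrying `P f` to `supp f` and to `epi f*`. So everything reduces
to `P (f + g) = cl (P f + P g)` in `ℝ²`.

Suppose `(a, b) ∈ P (f + g)` is strictly separated from `P f + P g` by a functional `(u, v)`.
Since `P f + P g` is a lower set, `u, v ≤ 0`. If `v < 0`, the functional is a negative multiple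
of evaluation at the point `x₀` with `x₀² = u / v`, and by ℋ-convexity `(f + g) x₀` is the
supremum of `ψ_z x₀` over `z ∈ P f + P g`, a contradiction. If `v = 0`, all slopes in
`P f + P g` are at most some `σ < a`. A bounded domain would admit minorants of every slope, so
both domains are unbounded in `x²`; as ℋ-convex functions are convex in `x²`, so is
`dom f ∩ dom g`. Every chord of `f` (or `g`) has the slope of a minorant, so on the common
domain `(f + g) x ≤ (f + g) x₁ + σ (x² - x₁²)`, contradicting `a x² + b ≤ (f + g) x` for
large `x`.
-/

open Topology

def minorantCoeffs (f : ℝ → EReal) : Set (ℝ × ℝ) :=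
  {p | ∀ x, (psiQ p.1 p.2 x : EReal) ≤ f x}

noncomputable def coeffToHq : ℝ × ℝ →ₗ[ℝ] (ℝ → ℝ) where
  toFun p := psiQ p.1 p.2
  map_add' p q := by funext x; simp only [psiQ, Prod.fst_add, Prod.snd_add, Pi.add_apply]; ring
  map_smul' c p := by
    funext x; simp only [psiQ, Prod.smul_fst, Prod.smul_snd, smul_eq_mul, RingHom.id_apply,
      Pi.smul_apply]; ring

lemma coeffToHq_apply (p : ℝ × ℝ) : coeffToHq p = psiQ p.1 p.2 := rfl

lemma psiQ_add (p q : ℝ × ℝ) (x : ℝ) :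
    psiQ (p + q).1 (p + q).2 x = psiQ p.1 p.2 x + psiQ q.1 q.2 x := by
  rw [← coeffToHq_apply, map_add]; rfl

lemma minorantCoeffs_eq_iInter (f : ℝ → EReal) :
    minorantCoeffs f =
      ⋂ x, (LinearMap.proj x ∘ₗ coeffToHq) ⁻¹' ((↑) ⁻¹' Iic (f x) : Set ℝ) := by
  ext p
  simp [minorantCoeffs, coeffToHq_apply]

lemma isClosed_minorantCoeffs (f : ℝ → EReal) : IsClosed (minorantCoeffs f) := by
  rw [minorantCoeffs_eq_iInter]
  exact isClosed_iInter fun x => (isClosed_Iic.preimage continuous_coe_real_ereal).preimage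
    (LinearMap.proj x ∘ₗ coeffToHq).continuous_of_finiteDimensional

lemma convex_minorantCoeffs (f : ℝ → EReal) : Convex ℝ (minorantCoeffs f) := by
  rw [minorantCoeffs_eq_iInter]
  exact convex_iInter fun x =>
    ((isLowerSet_Iic _).preimage EReal.coe_strictMono.monotone).ordConnected.convex
      |>.linear_preimage _

lemma isLowerSet_minorantCoeffs (f : ℝ → EReal) : IsLowerSet (minorantCoeffs f) := by
  intro p q hqp hp x
  refine le_trans (EReal.coe_le_coe_iff.2 ?_) (hp x)
  simp only [psiQ]
  nlinarith [hqp.1, hqp.2, sq_nonneg x]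

lemma add_subset_minorantCoeffs_add (f g : ℝ → EReal) :
    minorantCoeffs f + minorantCoeffs g ⊆ minorantCoeffs (fun x => f x + g x) := by
  rintro _ ⟨p, hp, q, hq, rfl⟩ x
  rw [psiQ_add, EReal.coe_add]
  exact add_le_add (hp x) (hq x)

lemma exists_lt_sq_lt_top_of_bddAbove {f : ℝ → EReal} (hne : (minorantCoeffs f).Nonempty)
    (hbdd : BddAbove (Prod.fst '' minorantCoeffs f)) (T : ℝ) : ∃ x, T < x ^ 2 ∧ f x < ⊤ := by
  by_contra! hT
  obtain ⟨p₀, hp₀⟩ := hne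
  obtain ⟨M, hM⟩ := hbdd
  have hmem : (M + 1, p₀.2 - |M + 1 - p₀.1| * max T 0) ∈ minorantCoeffs f := by
    intro x
    rcases lt_or_ge T (x ^ 2) with hx | hx
    · exact le_top.trans (hT x hx)
    · refine le_trans (EReal.coe_le_coe_iff.2 ?_) (hp₀ x)
      simp only [psiQ]
      nlinarith [le_abs_self (M + 1 - p₀.1), abs_nonneg (M + 1 - p₀.1), le_max_left T 0,
        le_max_right T 0, sq_nonneg x]
  linarith [hM ⟨_, hmem, rfl⟩]

namespace ConvexIn

variable {f g : ℝ → EReal}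

lemma bot_lt (hf : ConvexIn Hq f) (x : ℝ) : ⊥ < f x := by
  obtain ⟨S, ⟨h, hh⟩, -, hrep⟩ := hf
  rw [hrep]
  exact (EReal.bot_lt_coe _).trans_le (le_biSup (fun h : ℝ → ℝ => (h x : EReal)) hh)

lemma exists_lt_psiQ (hf : ConvexIn Hq f) {x c : ℝ} (h : (c : EReal) < f x) :
    ∃ p ∈ minorantCoeffs f, c < psiQ p.1 p.2 x := by
  obtain ⟨S, -, hSH, hrep⟩ := hf
  rw [hrep x, lt_biSup_iff] at h
  obtain ⟨_, hh, hlt⟩ := h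
  obtain ⟨a, b, rfl⟩ := hSH hh
  refine ⟨(a, b), fun y => ?_, EReal.coe_lt_coe_iff.1 hlt⟩
  rw [hrep y]
  exact le_biSup (fun h : ℝ → ℝ => (h y : EReal)) hh

lemma minorantCoeffs_nonempty (hf : ConvexIn Hq f) : (minorantCoeffs f).Nonempty := by
  obtain ⟨c, -, hc⟩ := EReal.lt_iff_exists_real_btwn.1 (hf.bot_lt 0)
  obtain ⟨p, hp, -⟩ := hf.exists_lt_psiQ hc
  exact ⟨p, hp⟩

lemma exists_eq_coe (hf : ConvexIn Hq f) {x : ℝ} (h : f x < ⊤) : ∃ c : ℝ, f x = c :=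
  ⟨_, (EReal.coe_toReal h.ne (hf.bot_lt x).ne').symm⟩

lemma exists_mem_add_lt_psiQ (hf : ConvexIn Hq f) (hg : ConvexIn Hq g) {x c : ℝ}
    (h : (c : EReal) < f x + g x) :
    ∃ z ∈ minorantCoeffs f + minorantCoeffs g, c < psiQ z.1 z.2 x := by
  obtain ⟨c₁, hc, hc₁⟩ := EReal.lt_iff_exists_real_btwn.1 (EReal.sub_lt_of_lt_add h)
  have hc₂ : ((c - c₁ : ℝ) : EReal) < g x := by
    rw [EReal.coe_sub]
    exact EReal.sub_lt_of_lt_add'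
      ((EReal.sub_lt_iff (.inr (EReal.coe_ne_bot c)) (.inr (EReal.coe_ne_top c))).1 hc)
  obtain ⟨p, hp, hpx⟩ := hf.exists_lt_psiQ hc₁
  obtain ⟨q, hq, hqx⟩ := hg.exists_lt_psiQ hc₂
  refine ⟨p + q, add_mem_add hp hq, ?_⟩
  rw [psiQ_add]
  linarith

/-- `f` is convex as a function of `x ^ 2`: the three-point inequality, multiplied out. -/
lemma mul_sub_le_mul_sub (hf : ConvexIn Hq f) {x y z c d e : ℝ}
    (hy : f y ≤ c) (hz : f z ≤ d) (hyx : y ^ 2 ≤ x ^ 2) (hxz : x ^ 2 ≤ z ^ 2)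
    (hx : (e : EReal) ≤ f x) :
    (e - c) * (z ^ 2 - y ^ 2) ≤ (d - c) * (x ^ 2 - y ^ 2) := by
  by_contra! hlt
  have hδ : 0 < z ^ 2 - y ^ 2 := by
    by_contra! h0
    rw [show z ^ 2 - y ^ 2 = 0 by linarith, show x ^ 2 - y ^ 2 = 0 by linarith] at hlt
    simp at hlt
  set w := c + (d - c) * (x ^ 2 - y ^ 2) / (z ^ 2 - y ^ 2)
  have hδw : (z ^ 2 - y ^ 2) * w = (z ^ 2 - y ^ 2) * c + (d - c) * (x ^ 2 - y ^ 2) := by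
    simp only [w]; field_simp
  have hw : w < e := by nlinarith
  obtain ⟨p, hp, hpx⟩ := hf.exists_lt_psiQ ((EReal.coe_lt_coe_iff.2 hw).trans_le hx)
  have hpy : psiQ p.1 p.2 y ≤ c := EReal.coe_le_coe_iff.1 ((hp y).trans hy)
  have hpz : psiQ p.1 p.2 z ≤ d := EReal.coe_le_coe_iff.1 ((hp z).trans hz)
  simp only [psiQ] at hpx hpy hpz
  nlinarith [mul_le_mul_of_nonneg_left hpy (sub_nonneg.2 hxz),
    mul_le_mul_of_nonneg_left hpz (sub_nonneg.2 hyx)]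

lemma lt_top_of_sq_between (hf : ConvexIn Hq f) {x y z : ℝ} (hy : f y < ⊤) (hz : f z < ⊤)
    (hyx : y ^ 2 ≤ x ^ 2) (hxz : x ^ 2 ≤ z ^ 2) (hyz : y ^ 2 < z ^ 2) : f x < ⊤ := by
  obtain ⟨c, hc, -⟩ := EReal.lt_iff_exists_real_btwn.1 hy
  obtain ⟨d, hd, -⟩ := EReal.lt_iff_exists_real_btwn.1 hz
  refine lt_top_iff_ne_top.2 fun htop => ?_
  have h := hf.mul_sub_le_mul_sub hc.le hd.le hyx hxz (e := c + |d - c| + 1) (by simp [htop])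
  nlinarith [le_abs_self (d - c), abs_nonneg (d - c)]

lemma exists_mem_minorantCoeffs_slope (hf : ConvexIn Hq f) {x₁ x₂ c₁ c₂ : ℝ}
    (h₁₂ : x₁ ^ 2 < x₂ ^ 2) (h₁ : f x₁ = c₁) (h₂ : f x₂ = c₂) :
    ∃ p ∈ minorantCoeffs f, c₂ - c₁ = p.1 * (x₂ ^ 2 - x₁ ^ 2) := by
  obtain ⟨p₀, hp₀⟩ := hf.minorantCoeffs_nonempty
  set m := (c₂ - c₁) / (x₂ ^ 2 - x₁ ^ 2)
  have hm : c₂ - c₁ = m * (x₂ ^ 2 - x₁ ^ 2) := (div_mul_cancel₀ _ (sub_pos.2 h₁₂).ne').symm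
  -- the chord line, lowered below `ψ_{p₀}` on the range `x₁² ≤ x² ≤ x₂²`
  refine ⟨(m, min (c₁ - m * x₁ ^ 2) (p₀.2 - |m - p₀.1| * x₂ ^ 2)), fun x => ?_, hm⟩
  refine EReal.le_of_forall_lt_iff_le.1 fun d hd => EReal.coe_le_coe_iff.2 ?_
  simp only [psiQ]
  have hmin₁ := min_le_left (c₁ - m * x₁ ^ 2) (p₀.2 - |m - p₀.1| * x₂ ^ 2)
  have hmin₂ := min_le_right (c₁ - m * x₁ ^ 2) (p₀.2 - |m - p₀.1| * x₂ ^ 2)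
  rcases le_total (x ^ 2) (x₁ ^ 2) with hx | hx
  · have h := hf.mul_sub_le_mul_sub hd.le h₂.le hx h₁₂.le h₁.ge
    nlinarith
  rcases le_total (x ^ 2) (x₂ ^ 2) with hx' | hx'
  · have hp₀x : psiQ p₀.1 p₀.2 x < d := EReal.coe_lt_coe_iff.1 ((hp₀ x).trans_lt hd)
    simp only [psiQ] at hp₀x
    nlinarith [le_abs_self (m - p₀.1), abs_nonneg (m - p₀.1)]
  · have h := hf.mul_sub_le_mul_sub h₁.le hd.le h₁₂.le hx' h₂.ge
    nlinarith

lemma exists_lt_sq_lt_top_add (hf : ConvexIn Hq f) (hg : ConvexIn Hq g)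
    (hbf : BddAbove (Prod.fst '' minorantCoeffs f))
    (hbg : BddAbove (Prod.fst '' minorantCoeffs g))
    {x₁ : ℝ} (hf₁ : f x₁ < ⊤) (hg₁ : g x₁ < ⊤) (T : ℝ) :
    ∃ x, T < x ^ 2 ∧ x₁ ^ 2 < x ^ 2 ∧ f x < ⊤ ∧ g x < ⊤ := by
  obtain ⟨y, hy, hfy⟩ :=
    exists_lt_sq_lt_top_of_bddAbove hf.minorantCoeffs_nonempty hbf (max T (x₁ ^ 2))
  obtain ⟨z, hz, hgz⟩ :=
    exists_lt_sq_lt_top_of_bddAbove hg.minorantCoeffs_nonempty hbg (max T (x₁ ^ 2))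
  rw [max_lt_iff] at hy hz
  rcases le_total (y ^ 2) (z ^ 2) with h | h
  · exact ⟨y, hy.1, hy.2, hfy, hg.lt_top_of_sq_between hg₁ hgz hy.2.le h hz.2⟩
  · exact ⟨z, hz.1, hz.2, hf.lt_top_of_sq_between hf₁ hfy hz.2.le h hy.2, hgz⟩

lemma fst_le_of_forall_fst_add_le (hf : ConvexIn Hq f) (hg : ConvexIn Hq g)
    (hdom : ∃ x, f x < ⊤ ∧ g x < ⊤) {σ : ℝ}
    (hσ : ∀ p ∈ minorantCoeffs f, ∀ q ∈ minorantCoeffs g, p.1 + q.1 ≤ σ) {a b : ℝ}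
    (hab : (a, b) ∈ minorantCoeffs (fun x => f x + g x)) : a ≤ σ := by
  obtain ⟨x₁, hf₁, hg₁⟩ := hdom
  obtain ⟨p₀, hp₀⟩ := hf.minorantCoeffs_nonempty
  obtain ⟨q₀, hq₀⟩ := hg.minorantCoeffs_nonempty
  have hbf : BddAbove (Prod.fst '' minorantCoeffs f) := ⟨σ - q₀.1, by
    rintro _ ⟨p, hp, rfl⟩
    linarith [hσ p hp q₀ hq₀]⟩
  have hbg : BddAbove (Prod.fst '' minorantCoeffs g) := ⟨σ - p₀.1, by
    rintro _ ⟨q, hq, rfl⟩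
    linarith [hσ p₀ hp₀ q hq]⟩
  obtain ⟨c₁, hc₁⟩ := hf.exists_eq_coe hf₁
  obtain ⟨d₁, hd₁⟩ := hg.exists_eq_coe hg₁
  by_contra! hlt
  obtain ⟨x, hx, hx₁, hfx, hgx⟩ := hf.exists_lt_sq_lt_top_add hg hbf hbg hf₁ hg₁
    ((c₁ + d₁ - σ * x₁ ^ 2 - b) / (a - σ))
  obtain ⟨c, hc⟩ := hf.exists_eq_coe hfx
  obtain ⟨d, hd⟩ := hg.exists_eq_coe hgx
  obtain ⟨p, hp, hpc⟩ := hf.exists_mem_minorantCoeffs_slope hx₁ hc₁ hc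
  obtain ⟨q, hq, hqd⟩ := hg.exists_mem_minorantCoeffs_slope hx₁ hd₁ hd
  have habx : ((a * x ^ 2 + b : ℝ) : EReal) ≤ f x + g x := hab x
  rw [hc, hd, ← EReal.coe_add, EReal.coe_le_coe_iff] at habx
  rw [div_lt_iff₀ (sub_pos.2 hlt)] at hx
  have hpq := hσ p hp q hq
  nlinarith [mul_le_mul_of_nonneg_right hpq (sub_pos.2 hx₁).le]

end ConvexIn

lemma map_nonpos_of_isLowerSet_of_forall_lt {E : Type*} [AddCommGroup E] [PartialOrder E]
    [IsOrderedAddMonoid E] (L : E →+ ℝ) {C : Set E} (hC : IsLowerSet C) (hne : C.Nonempty)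
    {s : ℝ} (hs : ∀ z ∈ C, s < L z) {e : E} (he : 0 ≤ e) : L e ≤ 0 := by
  obtain ⟨z, hz⟩ := hne
  by_contra! hpos
  obtain ⟨n, hn⟩ := exists_nat_gt ((L z - s) / L e)
  have h := hs (z - n • e) (hC (sub_le_self _ (nsmul_nonneg he n)) hz)
  rw [map_sub, map_nsmul, nsmul_eq_mul] at h
  rw [div_lt_iff₀ hpos] at hn
  linarith

lemma dual_prod_apply (L : StrongDual ℝ (ℝ × ℝ)) (z : ℝ × ℝ) :
    L z = L (1, 0) * z.1 + L (0, 1) * z.2 := by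
  conv_lhs => rw [show z = z.1 • ((1 : ℝ), (0 : ℝ)) + z.2 • ((0 : ℝ), (1 : ℝ)) by
    ext <;> simp]
  rw [map_add, map_smul, map_smul, smul_eq_mul, smul_eq_mul, mul_comm, mul_comm z.2]

lemma ConvexIn.exists_mem_add_map_lt {f g : ℝ → EReal} (hf : ConvexIn Hq f)
    (hg : ConvexIn Hq g) {ab : ℝ × ℝ} (hab : ab ∈ minorantCoeffs (fun x => f x + g x))
    (L : StrongDual ℝ (ℝ × ℝ)) (hu : L (1, 0) ≤ 0) (hv : L (0, 1) < 0) {s : ℝ} (hs : L ab < s) :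
    ∃ z ∈ minorantCoeffs f + minorantCoeffs g, L z < s := by
  set x₀ := √(L (1, 0) / L (0, 1))
  have hL : ∀ z : ℝ × ℝ, L z = L (0, 1) * psiQ z.1 z.2 x₀ := by
    intro z
    rw [dual_prod_apply, psiQ, Real.sq_sqrt (div_nonneg_of_nonpos hu hv.le)]
    field_simp [hv.ne]
  rw [hL] at hs
  obtain ⟨z, hz, hlt⟩ := hf.exists_mem_add_lt_psiQ hg
    ((EReal.coe_lt_coe_iff.2 ((div_lt_iff_of_neg' hv).2 hs)).trans_le (hab x₀))
  refine ⟨z, hz, ?_⟩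
  rwa [hL, ← div_lt_iff_of_neg' hv]

lemma minorantCoeffs_add {f g : ℝ → EReal} (hf : ConvexIn Hq f) (hg : ConvexIn Hq g)
    (hdom : ∃ x, f x < ⊤ ∧ g x < ⊤) :
    minorantCoeffs (fun x => f x + g x) = closure (minorantCoeffs f + minorantCoeffs g) := by
  refine Subset.antisymm (fun ab hab => ?_)
    (closure_minimal (add_subset_minorantCoeffs_add f g) (isClosed_minorantCoeffs _))
  by_contra hN
  obtain ⟨L, s, hLab, hsep⟩ := geometric_hahn_banach_point_closed
    ((convex_minorantCoeffs f).add (convex_minorantCoeffs g)).closure isClosed_closure hN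
  replace hsep : ∀ z ∈ minorantCoeffs f + minorantCoeffs g, s < L z :=
    fun z hz => hsep z (subset_closure hz)
  have hne := hf.minorantCoeffs_nonempty.add hg.minorantCoeffs_nonempty
  have hnonpos : ∀ e : ℝ × ℝ, 0 ≤ e → L e ≤ 0 := fun _ =>
    map_nonpos_of_isLowerSet_of_forall_lt (L : ℝ × ℝ →+ ℝ)
      (isLowerSet_minorantCoeffs g).add_left hne hsep
  have hu : L (1, 0) ≤ 0 := hnonpos _ (by simp [Prod.le_def])
  have hv : L (0, 1) ≤ 0 := hnonpos _ (by simp [Prod.le_def])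
  rcases hv.lt_or_eq with hv | hv
  · obtain ⟨z, hz, hlt⟩ := hf.exists_mem_add_map_lt hg hab L hu hv hLab
    linarith [hsep z hz]
  rcases hu.lt_or_eq with hu | hu
  · have hσ : ∀ p ∈ minorantCoeffs f, ∀ q ∈ minorantCoeffs g, p.1 + q.1 ≤ s / L (1, 0) := by
      intro p hp q hq
      have hpq := hsep _ (add_mem_add hp hq)
      rw [dual_prod_apply, hv, zero_mul, add_zero, Prod.fst_add] at hpq
      rw [le_div_iff_of_neg' hu]
      linarith
    have ha := hf.fst_le_of_forall_fst_add_le hg hdom hσ hab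
    rw [dual_prod_apply, hv, zero_mul, add_zero] at hLab
    rw [le_div_iff_of_neg' hu] at ha
    linarith
  · obtain ⟨z, hz⟩ := hne
    have hLz := hsep z hz
    simp only [dual_prod_apply, hu, hv, zero_mul, add_zero] at hLz hLab
    linarith

lemma Topology.IsClosedEmbedding.closure_image_inter_range {α β : Type*} [TopologicalSpace α]
    [TopologicalSpace β] {e : α → β} (he : IsClosedEmbedding e) (s : Set α) :
    closure (e '' s) ∩ range e = e '' closure s := by
  rw [he.closure_image_eq, inter_eq_left.2 (image_subset_range _ _)]

lemma convexSetIn_suppIn (H : Set (X → ℝ)) (f : X → EReal) : ConvexSetIn H (suppIn H f) := by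
  refine ⟨fun _ hl => hl.1, fun l₀ hl₀ hl₀f => ?_⟩
  obtain ⟨x, hx⟩ : ∃ x, f x < l₀ x := by
    by_contra! h
    exact hl₀f ⟨hl₀, h⟩
  exact ⟨x, (iSup₂_le fun l hl => hl.2 x).trans_lt hx⟩

lemma range_coeffToHq : range coeffToHq = Hq := by
  ext h
  constructor
  · rintro ⟨p, rfl⟩
    exact ⟨p.1, p.2, rfl⟩
  · rintro ⟨a, b, rfl⟩
    exact ⟨(a, b), rfl⟩

lemma isClosedEmbedding_coeffToHq : IsClosedEmbedding coeffToHq := by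
  refine LinearMap.isClosedEmbedding_of_injective (LinearMap.ker_eq_bot.2 fun p q hpq => ?_)
  have h₀ := congr_fun hpq 0
  have h₁ := congr_fun hpq 1
  simp only [coeffToHq_apply, psiQ] at h₀ h₁
  ext <;> linarith

lemma suppIn_Hq_eq_image (f : ℝ → EReal) : suppIn Hq f = coeffToHq '' minorantCoeffs f := by
  ext h
  constructor
  · rintro ⟨⟨a, b, rfl⟩, hle⟩
    exact ⟨(a, b), hle, rfl⟩
  · rintro ⟨p, hp, rfl⟩
    exact ⟨⟨p.1, p.2, rfl⟩, hp⟩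

noncomputable def coeffToEpi : ℝ × ℝ →ₗ[ℝ] (ℝ → ℝ) × ℝ where
  toFun p := (phiQ p.1, -p.2)
  map_add' p q := by
    ext x <;> simp only [phiQ, Prod.fst_add, Prod.snd_add, Pi.add_apply] <;> ring
  map_smul' c p := by
    ext x <;> simp only [phiQ, Prod.smul_fst, Prod.smul_snd, smul_eq_mul, RingHom.id_apply,
      Pi.smul_apply] <;> ring

lemma range_coeffToEpi : range coeffToEpi = {p : (ℝ → ℝ) × ℝ | p.1 ∈ Lq} := by
  ext ⟨l, r⟩
  constructor
  · rintro ⟨p, hp⟩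
    exact ⟨p.1, congr_arg Prod.fst hp⟩
  · rintro ⟨a, rfl⟩
    exact ⟨(a, -r), by simp [coeffToEpi]⟩

lemma isClosedEmbedding_coeffToEpi : IsClosedEmbedding coeffToEpi := by
  refine LinearMap.isClosedEmbedding_of_injective (LinearMap.ker_eq_bot.2 fun p q hpq => ?_)
  have h₁ := congr_fun (congr_arg Prod.fst hpq) 1
  have h₂ := congr_arg Prod.snd hpq
  simp only [coeffToEpi, LinearMap.coe_mk, AddHom.coe_mk, phiQ] at h₁ h₂
  ext <;> linarith

lemma fconj_phiQ_le_iff (f : ℝ → EReal) (a r : ℝ) :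
    fconj f (phiQ a) ≤ r ↔ ∀ x, (psiQ a (-r) x : EReal) ≤ f x := by
  refine iSup_le_iff.trans (forall_congr' fun x => ?_)
  rw [EReal.sub_le_iff_le_add (.inr (EReal.coe_ne_top r)) (.inr (EReal.coe_ne_bot r)), add_comm,
    ← EReal.sub_le_iff_le_add (.inl (EReal.coe_ne_bot r)) (.inl (EReal.coe_ne_top r)),
    ← EReal.coe_sub]
  rfl

lemma epiConj_Lq_eq_image (f : ℝ → EReal) : epiConj Lq f = coeffToEpi '' minorantCoeffs f := by
  ext ⟨l, r⟩
  constructor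
  · rintro ⟨⟨a, rfl⟩, hle⟩
    exact ⟨(a, -r), (fconj_phiQ_le_iff f a r).1 hle, by simp [coeffToEpi]⟩
  · rintro ⟨p, hp, hpe⟩
    simp only [coeffToEpi, LinearMap.coe_mk, AddHom.coe_mk, Prod.mk.injEq] at hpe
    obtain ⟨rfl, rfl⟩ := hpe
    exact ⟨⟨p.1, rfl⟩, (fconj_phiQ_le_iff f p.1 _).2 (by rwa [neg_neg])⟩

theorem stmt19_general (f g : ℝ → EReal)
    (hf : ConvexIn Hq f) (hg : ConvexIn Hq g)
    (hdom : ∃ x : ℝ, f x < ⊤ ∧ g x < ⊤) :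
    ConvexSetIn Hq (closure (suppIn Hq f + suppIn Hq g) ∩ Hq) ∧
    suppIn Hq (fun x => f x + g x) = closure (suppIn Hq f + suppIn Hq g) ∩ Hq ∧
    closure (epiConj Lq f + epiConj Lq g) ∩ {p : (ℝ → ℝ) × ℝ | p.1 ∈ Lq}
      = epiConj Lq (fun x => f x + g x) := by
  have hsum := minorantCoeffs_add hf hg hdom
  have hsupp : suppIn Hq (fun x => f x + g x) = closure (suppIn Hq f + suppIn Hq g) ∩ Hq := by
    rw [suppIn_Hq_eq_image, suppIn_Hq_eq_image, suppIn_Hq_eq_image, ← image_add,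
      ← range_coeffToHq, isClosedEmbedding_coeffToHq.closure_image_inter_range, hsum]
  refine ⟨hsupp ▸ convexSetIn_suppIn _ _, hsupp, ?_⟩
  rw [epiConj_Lq_eq_image, epiConj_Lq_eq_image, epiConj_Lq_eq_image, ← image_add,
    ← range_coeffToEpi, isClosedEmbedding_coeffToEpi.closure_image_inter_range, hsum]

/-- for ℋ-convex `f, g : ℝ → ℝ ∪ {+∞}` with `dom f ∩ dom g ≠ ∅`,
the closure (in the pointwise convergence topology on ℋ) of `supp f + supp g` is an
ℋ-convex set, `supp (f + g) = cl(supp f + supp g)`, and equivalently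
`cl(epi f* + epi g*) = epi (f + g)*` in `𝓛 × ℝ`. -/
theorem stmt19 (f g : ℝ → EReal) (hf0 : ∀ y, f y ≠ ⊥) (hg0 : ∀ y, g y ≠ ⊥)
    (hf : ConvexIn Hq f) (hg : ConvexIn Hq g)
    (hdom : ∃ x : ℝ, f x < ⊤ ∧ g x < ⊤) :
    ConvexSetIn Hq (closure (suppIn Hq f + suppIn Hq g) ∩ Hq) ∧
    suppIn Hq (fun x => f x + g x) = closure (suppIn Hq f + suppIn Hq g) ∩ Hq ∧
    closure (epiConj Lq f + epiConj Lq g) ∩ {p : (ℝ → ℝ) × ℝ | p.1 ∈ Lq}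
      = epiConj Lq (fun x => f x + g x) :=
  stmt19_general f g hf hg hdom
end
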